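/- arXiv:1808.07540 — 7 statements merged into one kernel-verified Lean document; each statement's English description precedes it below -/
import Mathlib

section
/- Define the time to buy items i then j at rate G as y_i/G + y_j/(G+x_i). For positive reals x_1, x_2, y_1, y_2, G with y_1/x_1 > y_2/x_2, we have y_1/G + y_2/(G+x_1) < y_2/G + y_1/(G+x_2) if and only if G < (y_2 - y_1)/(y_1/x_1 - y_2/x_2). -/
theorem stmt_2 (x₁ x₂ y₁ y₂ G : ℝ)
    (hx₁ : 0 < x₁) (hx₂ : 0 < x₂) (hy₁ : 0 < y₁) (hy₂ : 0 < y₂) (hG : 0 < G)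
    (h : y₁ / x₁ > y₂ / x₂) :
    y₁ / G + y₂ / (G + x₁) < y₂ / G + y₁ / (G + x₂) ↔
      G < (y₂ - y₁) / (y₁ / x₁ - y₂ / x₂) := by
  have hD : 0 < y₁ / x₁ - y₂ / x₂ := sub_pos.2 h
  have h1 : 0 < G + x₁ := by linarith
  have h2 : 0 < G + x₂ := by linarith
  rw [lt_div_iff₀ hD, div_add_div _ _ hG.ne' h1.ne', div_add_div _ _ hG.ne' h2.ne',
    div_lt_div_iff₀ (by positivity) (by positivity)]
  have key : y₁ * x₂ - y₂ * x₁ = (y₁ / x₁ - y₂ / x₂) * (x₁ * x₂) := by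
    field_simp
  constructor
  · intro hlt
    nlinarith [key, mul_pos hx₁ hx₂, mul_pos hG (mul_pos hx₁ hx₂), sq_nonneg G]
  · intro hlt
    nlinarith [key, mul_pos hx₁ hx₂, mul_pos hG (mul_pos hx₁ hx₂), sq_nonneg G]
end

section
/- For positive reals x_1, x_2, y_1, y_2, G, the inequality y_1/x_1 + y_1/G < y_2/x_2 + y_2/G is equivalent to y_1/G + y_2/(G+x_1) < y_2/G + y_1/(G+x_2). -/
theorem stmt_3 (x₁ x₂ y₁ y₂ G : ℝ)
    (hx₁ : 0 < x₁) (hx₂ : 0 < x₂) (hy₁ : 0 < y₁) (hy₂ : 0 < y₂) (hG : 0 < G) :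
    y₁ / x₁ + y₁ / G < y₂ / x₂ + y₂ / G ↔
      y₁ / G + y₂ / (G + x₁) < y₂ / G + y₁ / (G + x₂) := by
  have h1 : 0 < G + x₁ := by linarith
  have h2 : 0 < G + x₂ := by linarith
  have key : (y₁ / x₁ + y₁ / G < y₂ / x₂ + y₂ / G ↔ y₁ * (G + x₁) * x₂ < y₂ * (G + x₂) * x₁) := by
    rw [div_add_div _ _ (ne_of_gt hx₁) (ne_of_gt hG), div_add_div _ _ (ne_of_gt hx₂) (ne_of_gt hG),
      div_lt_div_iff₀ (by positivity) (by positivity)]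
    constructor <;> intro h <;> nlinarith
  have key2 : (y₁ / G + y₂ / (G + x₁) < y₂ / G + y₁ / (G + x₂) ↔ y₁ * (G + x₁) * x₂ < y₂ * (G + x₂) * x₁) := by
    rw [div_add_div _ _ (ne_of_gt hG) (ne_of_gt h1), div_add_div _ _ (ne_of_gt hG) (ne_of_gt h2),
      div_lt_div_iff₀ (by positivity) (by positivity)]
    constructor <;> intro h <;> nlinarith [mul_pos hG hG, mul_pos hx₁ hx₂]
  rw [key, key2]
end

section
/- Let G, x, y > 0, α > 1, M > 0, and suppose M/y < 1 + G/x. Then for every k ≥ 1, the time Σ_{n=0}^{k-1} y·α^n/(G+nx) + M/(G+kx) to buy k items and wait strictly exceeds M/G, the time to just wait. -/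
/-!
The `n`-th purchase shortens the final wait from `M / (G + n x)` to `M / (G + (n + 1) x)`, saving
`M x / ((G + n x) (G + (n + 1) x))`. The hypothesis `M / y < 1 + G / x` says `M x < y (G + x)`, so
this saving is less than the purchase time `y αⁿ / (G + n x)`. Summing over `n < k`, the savings
telescope to `M / G - M / (G + k x)`.
-/

theorem sub_lt_sum_range_of_forall_sub_succ_lt {β : Type*} [AddCommGroup β] [PartialOrder β]
    [IsOrderedCancelAddMonoid β] {f g : ℕ → β} (h : ∀ n, f n - f (n + 1) < g n) {k : ℕ}
    (hk : 1 ≤ k) : f 0 - f k < ∑ n ∈ Finset.range k, g n := by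
  rw [← Finset.sum_range_sub']
  exact Finset.sum_lt_sum_of_nonempty (Finset.nonempty_range_iff.mpr (by omega)) fun n _ => h n

theorem div_sub_div_lt_div_of_mul_sub_lt {M A B c : ℝ} (hA : 0 < A) (hB : 0 < B)
    (h : M * (B - A) < c * B) : M / A - M / B < c / A := by
  rw [div_sub_div _ _ hA.ne' hB.ne', div_lt_div_iff₀ (mul_pos hA hB) hA]
  nlinarith

theorem mul_lt_mul_add_of_div_lt_one_add_div {M y G x : ℝ} (hx : 0 < x) (hy : 0 < y)
    (h : M / y < 1 + G / x) : M * x < y * (x + G) := by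
  rw [one_add_div hx.ne', div_lt_div_iff₀ hy hx] at h
  linarith

theorem stmt_4_general (G x y α M : ℝ)
    (hG : 0 < G) (hx : 0 < x) (hy : 0 < y) (hα : 1 < α)
    (h : M / y < 1 + G / x) :
    ∀ k : ℕ, 1 ≤ k →
      (∑ n ∈ Finset.range k, y * α ^ n / (G + n * x)) + M / (G + k * x) > M / G := by
  have hMx := mul_lt_mul_add_of_div_lt_one_add_div hx hy h
  have hstep (n : ℕ) : M / (G + n * x) - M / (G + (n + 1 : ℕ) * x) < y * α ^ n / (G + n * x) := by
    have hn : (0 : ℝ) ≤ n * x := by positivity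
    refine div_sub_div_lt_div_of_mul_sub_lt (by positivity) (by positivity) ?_
    calc M * (G + (n + 1 : ℕ) * x - (G + n * x)) = M * x := by push_cast; ring
      _ < y * (x + G) := hMx
      _ ≤ y * α ^ n * (G + (n + 1 : ℕ) * x) := by
        push_cast
        gcongr ?_ * ?_
        · exact le_mul_of_one_le_right hy.le (one_le_pow₀ hα.le)
        · linarith
  intro k hk
  have := sub_lt_sum_range_of_forall_sub_succ_lt hstep hk
  simp only [Nat.cast_zero, zero_mul, add_zero] at this
  linarith

theorem stmt_4 (G x y α M : ℝ)
    (hG : 0 < G) (hx : 0 < x) (hy : 0 < y) (hα : 1 < α) (hM : 0 < M)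
    (h : M / y < 1 + G / x) :
    ∀ k : ℕ, 1 ≤ k →
      (∑ n ∈ Finset.range k, y * α ^ n / (G + n * x)) + M / (G + k * x) > M / G :=
  stmt_4_general G x y α M hG hx hy hα h
end

section
/- Let q > 0 and α > 1 satisfy q² + 2q ≥ 1/(α−1). Then for all y₂, x₂, G > 0 with q = G/x₂: y₂/x₂ + y₂/G ≤ α·(y₂/x₂ + y₂/(G+x₂)). -/
/-! Writing `q = G / x₂`, both efficiency scores are `y₂ / x₂` times a function of `q` alone:
`y₂ / x₂ + y₂ / G = (y₂ / x₂) (1 + 1 / q)` and `y₂ / x₂ + y₂ / (G + x₂) = (y₂ / x₂) (1 + 1 / (q + 1))`.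
Clearing denominators, `1 + 1 / q ≤ α (1 + 1 / (q + 1))` becomes `(q + 1)² ≤ α q (q + 2)`,
i.e. `1 ≤ (α - 1) (q² + 2q)`, which is the hypothesis. -/

lemma one_add_inv_le_mul_one_add_inv_add_one {q α : ℝ} (hq : 0 < q)
    (h : 1 ≤ (α - 1) * (q ^ 2 + 2 * q)) :
    1 + q⁻¹ ≤ α * (1 + (q + 1)⁻¹) := by
  have hq1 : 0 < q + 1 := by linarith
  rw [← sub_nonneg]
  have key : α * (1 + (q + 1)⁻¹) - (1 + q⁻¹) = ((α - 1) * (q ^ 2 + 2 * q) - 1) / (q * (q + 1)) := by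
    field_simp
    ring
  rw [key]
  exact div_nonneg (by linarith) (by positivity)

lemma div_add_div_eq_mul_one_add_inv {y x G : ℝ} (hx : 0 < x) (hG : 0 < G) :
    y / x + y / G = y / x * (1 + (G / x)⁻¹) := by
  field_simp

lemma div_add_div_add_eq_mul_one_add_inv {y x G : ℝ} (hx : 0 < x) (hG : 0 < G) :
    y / x + y / (G + x) = y / x * (1 + (G / x + 1)⁻¹) := by
  have : G + x ≠ 0 := by positivity
  field_simp

theorem stmt_6_general (q α : ℝ) (hα : 1 < α)
    (h : q ^ 2 + 2 * q ≥ 1 / (α - 1)) :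
    ∀ y₂ x₂ G : ℝ, 0 < y₂ → 0 < x₂ → 0 < G → q = G / x₂ →
      y₂ / x₂ + y₂ / G ≤ α * (y₂ / x₂ + y₂ / (G + x₂)) := by
  intro y x G hy hx hG hqG
  have hquad : 1 ≤ (α - 1) * (q ^ 2 + 2 * q) := by
    rw [mul_comm]
    exact (div_le_iff₀ (by linarith)).mp h
  rw [div_add_div_eq_mul_one_add_inv hx hG, div_add_div_add_eq_mul_one_add_inv hx hG, ← hqG,
    mul_left_comm]
  gcongr
  exact one_add_inv_le_mul_one_add_inv_add_one (hqG ▸ div_pos hG hx) hquad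

theorem stmt_6 (q α : ℝ) (hq : 0 < q) (hα : 1 < α)
    (h : q ^ 2 + 2 * q ≥ 1 / (α - 1)) :
    ∀ y₂ x₂ G : ℝ, 0 < y₂ → 0 < x₂ → 0 < G → q = G / x₂ →
      y₂ / x₂ + y₂ / G ≤ α * (y₂ / x₂ + y₂ / (G + x₂)) :=
  stmt_6_general q α hα h
end

section
/- Given positive integers a_1,...,a_k with Σ a_i = 2B, set W = B² + B + 1, and give item i rate increase a_i/W and cost a_i. For any subset S with Σ_{i∈S} a_i = B + n for some integer n ≥ 1, the total time to buy the items of S starting from rate 1 exceeds B. -/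
/-!
Buying an item never lowers the rate, and after buying all of `S` the rate is
`1 + (B + n) / W`; so each cost is paid at a rate at most that, and the total time is at
least `(B + n) / (1 + (B + n) / W) = W (B + n) / (W + B + n)`. This exceeds `B` exactly when
`(B + n) (W - B) > B W`, which follows from `B + n ≥ B + 1` and `W > B (B + 1)`.
-/

/-- Time to buy a list of items, each given as (rate increase, cost),
starting at generation rate `G` with 0 cookies. -/
noncomputable def buyTime (G : ℝ) : List (ℝ × ℝ) → ℝ
  | [] => 0
  | (x, y) :: rest => y / G + buyTime (G + x) rest

theorem sum_div_add_sum_le_buyTime {ι : Type*} (rate cost : ι → ℝ)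
    (hrate : ∀ i, 0 ≤ rate i) (hcost : ∀ i, 0 ≤ cost i) (l : List ι) {G : ℝ} (hG : 0 < G) :
    (l.map cost).sum / (G + (l.map rate).sum) ≤
      buyTime G (l.map fun i => (rate i, cost i)) := by
  induction l generalizing G with
  | nil => simp [buyTime]
  | cons i l ih =>
    have hrest : 0 ≤ (l.map rate).sum := List.sum_nonneg (by simp [hrate])
    have hfirst : cost i / (G + (rate i + (l.map rate).sum)) ≤ cost i / G :=
      div_le_div_of_nonneg_left (hcost i) hG (by linarith [hrate i])
    have hlater := ih (G := G + rate i) (by linarith [hrate i])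
    simp only [List.map_cons, List.sum_cons, buyTime, add_div]
    rw [add_assoc] at hlater
    linarith

theorem lt_div_one_add_div {B s W : ℝ} (hB : 0 ≤ B) (hs : B + 1 ≤ s) (hW : B * (B + 1) < W) :
    B < s / (1 + s / W) := by
  have hWpos : 0 < W := lt_of_le_of_lt (by positivity) hW
  have hBW : B ≤ W := by nlinarith
  rw [one_add_div hWpos.ne', div_div_eq_mul_div, lt_div_iff₀ (by linarith)]
  nlinarith [mul_le_mul_of_nonneg_right hs (sub_nonneg.2 hBW)]

theorem stmt_11_general (k B : ℕ) (a : Fin k → ℕ)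
    (W : ℝ) (hW : W = (B : ℝ) ^ 2 + B + 1)
    (n : ℕ) (hn : 1 ≤ n)
    (S : Finset (Fin k)) (hS : ∑ i ∈ S, a i = B + n)
    (l : List (Fin k)) (hnd : l.Nodup) (hlS : l.toFinset = S) :
    buyTime 1 (l.map fun i => ((a i : ℝ) / W, (a i : ℝ))) > B := by
  have hWpos : 0 < W := by rw [hW]; positivity
  have hS' : ∑ i ∈ S, (a i : ℝ) = B + n := by exact_mod_cast hS
  have hcost : (l.map fun i => (a i : ℝ)).sum = B + n := by
    rw [← List.sum_toFinset _ hnd, hlS, hS']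
  have hrate : (l.map fun i => (a i : ℝ) / W).sum = (B + n) / W := by
    rw [← List.sum_toFinset _ hnd, hlS, ← Finset.sum_div, hS']
  have htime := sum_div_add_sum_le_buyTime (fun i => (a i : ℝ) / W) (fun i => (a i : ℝ))
    (fun i => by positivity) (fun i => by positivity) l one_pos
  rw [hcost, hrate] at htime
  have hB : (B : ℝ) < (B + n) / (1 + (B + n) / W) :=
    lt_div_one_add_div (Nat.cast_nonneg B) (by gcongr; exact_mod_cast hn)
      (by rw [hW]; nlinarith)
  exact lt_of_lt_of_le hB htime

theorem stmt_11 (k B : ℕ) (hB : 0 < B) (a : Fin k → ℕ) (ha : ∀ i, 0 < a i)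
    (hsum : ∑ i, a i = 2 * B)
    (W : ℝ) (hW : W = (B : ℝ) ^ 2 + B + 1)
    (n : ℕ) (hn : 1 ≤ n)
    (S : Finset (Fin k)) (hS : ∑ i ∈ S, a i = B + n)
    (l : List (Fin k)) (hnd : l.Nodup) (hlS : l.toFinset = S) :
    buyTime 1 (l.map fun i => ((a i : ℝ) / W, (a i : ℝ))) > B :=
  stmt_11_general k B a W hW n hn S hS l hnd hlS
end

section
/- Deciding whether an instance of rate-goal Cookie Clicker (0 initial cookies, initial rate 1, k items with rate increases x_i, initial costs y_i, and cost multipliers α_i, all rational) admits a strategy reaching rate R within time T is NP-hard. -/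
/-- Run a Cookie Clicker strategy (a list of item purchases).  The state is
`(t, z, G, cnt)`: elapsed time, cookies on hand, generation rate, and how many
copies of each item have been bought.  Buying the next copy of item `i` costs
`Y i * A i ^ cnt i`; one waits (if necessary) until it is affordable, pays,
and the rate increases by `X i`. -/
noncomputable def run {k : ℕ} (X Y A : Fin k → ℝ) :
    List (Fin k) → ℝ × ℝ × ℝ × (Fin k → ℕ) → ℝ × ℝ × ℝ × (Fin k → ℕ)
  | [], s => s
  | i :: l, (t, z, G, cnt) =>
    let c := Y i * A i ^ cnt i
    let w := max ((c - z) / G) 0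
    run X Y A l (t + w, z + G * w - c, G + X i, Function.update cnt i (cnt i + 1))

/-- Rate-goal Cookie Clicker decision problem: starting with `0` cookies and
rate `1`, is there a strategy reaching rate at least `R` within time `T`? -/
noncomputable def ReachesRate {k : ℕ} (X Y A : Fin k → ℝ) (R T : ℝ) : Prop :=
  ∃ l : List (Fin k),
    (run X Y A l (0, 0, 1, fun _ => 0)).2.2.1 ≥ R ∧
    (run X Y A l (0, 0, 1, fun _ => 0)).1 ≤ T

/-!
Buying item `i` raises the rate by `a i / W`, so a strategy reaches the rate `1 + B / W` iff
the multiset of items it buys has `a`-weight `n ≥ B`.  Since the rate never exceeds its final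
value, everything paid within time `B` is at most `(1 + n / W) B`, while buying pays at least
`n`; as `W > B² + B` this forces `n = B` and a total bill below `B + 1`.  A repeated item would
cost at least `L ≥ B + 1`, so the items bought are distinct and form a subset of weight `B`.
Conversely, buying the items of such a subset once each, at rate at least `1`, takes time at
most `B`.
-/

section Run

variable {k : ℕ} (X Y A : Fin k → ℝ)

noncomputable def totalCost : List (Fin k) → (Fin k → ℕ) → ℝ
  | [], _ => 0
  | i :: l, cnt => Y i * A i ^ cnt i + totalCost l (Function.update cnt i (cnt i + 1))

theorem run_cons (i : Fin k) (l : List (Fin k)) (t z G : ℝ) (cnt : Fin k → ℕ) :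
    run X Y A (i :: l) (t, z, G, cnt) =
      run X Y A l (t + max ((Y i * A i ^ cnt i - z) / G) 0,
        z + G * max ((Y i * A i ^ cnt i - z) / G) 0 - Y i * A i ^ cnt i, G + X i,
        Function.update cnt i (cnt i + 1)) :=
  rfl

theorem run_rate : ∀ (l : List (Fin k)) (t z G : ℝ) (cnt : Fin k → ℕ),
    (run X Y A l (t, z, G, cnt)).2.2.1 = G + (l.map X).sum
  | [], _, _, _, _ => by simp [run]
  | i :: l, t, z, G, cnt => by
    rw [run_cons, run_rate, List.map_cons, List.sum_cons, add_assoc]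

theorem sub_le_mul_max_div {c z G : ℝ} (hG : 0 < G) : c - z ≤ G * max ((c - z) / G) 0 :=
  calc c - z = G * ((c - z) / G) := (mul_div_cancel₀ _ hG.ne').symm
    _ ≤ G * max ((c - z) / G) 0 := mul_le_mul_of_nonneg_left (le_max_left _ _) hG.le

/-- Every purchase is paid from cookies produced so far, at a rate at most the final one. -/
theorem totalCost_le_run (hX : ∀ i, 0 ≤ X i) : ∀ (l : List (Fin k)) (t z G : ℝ)
    (cnt : Fin k → ℕ), 0 ≤ z → 0 < G →
    totalCost Y A l cnt ≤
      z + (run X Y A l (t, z, G, cnt)).2.2.1 * ((run X Y A l (t, z, G, cnt)).1 - t)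
  | [], _, _, _, _, hz, _ => by simpa [totalCost, run] using hz
  | i :: l, t, z, G, cnt, hz, hG => by
    set c := Y i * A i ^ cnt i
    set w := max ((c - z) / G) 0
    have hw : 0 ≤ w := le_max_right _ _
    have hcw : c - z ≤ G * w := sub_le_mul_max_div hG
    have hrate : G ≤ (run X Y A l (t + w, z + G * w - c, G + X i,
        Function.update cnt i (cnt i + 1))).2.2.1 := by
      rw [run_rate]
      linarith [hX i, List.sum_nonneg (l := l.map X) (by simpa using fun j _ => hX j)]
    have ih := totalCost_le_run hX l (t + w) (z + G * w - c) (G + X i)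
      (Function.update cnt i (cnt i + 1)) (by linarith) (by linarith [hX i])
    rw [run_cons, totalCost]
    linarith [mul_le_mul_of_nonneg_right hrate hw]

/-- At rate at least `1`, waiting for a purchase never takes longer than its price. -/
theorem run_time_le (hX : ∀ i, 0 ≤ X i) (hY : ∀ i, 0 ≤ Y i) (hA : ∀ i, 0 ≤ A i) :
    ∀ (l : List (Fin k)) (t z G : ℝ) (cnt : Fin k → ℕ), 0 ≤ z → 1 ≤ G →
    (run X Y A l (t, z, G, cnt)).1 ≤ t + totalCost Y A l cnt
  | [], _, _, _, _, _, _ => by simp [totalCost, run]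
  | i :: l, t, z, G, cnt, hz, hG => by
    set c := Y i * A i ^ cnt i
    set w := max ((c - z) / G) 0
    have hc : 0 ≤ c := mul_nonneg (hY i) (pow_nonneg (hA i) _)
    have hwc : w ≤ c := max_le
      ((div_le_iff₀ (by linarith)).2 (by nlinarith)) hc
    have hcw : c - z ≤ G * w := sub_le_mul_max_div (by linarith)
    have ih := run_time_le hX hY hA l (t + w) (z + G * w - c) (G + X i)
      (Function.update cnt i (cnt i + 1)) (by linarith) (by linarith [hX i])
    rw [run_cons, totalCost]
    linarith

end Run

section TotalCost

variable {k : ℕ} {Y A : Fin k → ℝ}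

theorem totalCost_eq_sum_of_nodup : ∀ {l : List (Fin k)} {cnt : Fin k → ℕ}, l.Nodup →
    (∀ i ∈ l, cnt i = 0) → totalCost Y A l cnt = (l.map Y).sum
  | [], _, _, _ => rfl
  | i :: l, cnt, hl, hcnt => by
    have hi : i ∉ l := (List.nodup_cons.1 hl).1
    have hcnt' : ∀ j ∈ l, Function.update cnt i (cnt i + 1) j = 0 := fun j hj => by
      rw [Function.update_of_ne (ne_of_mem_of_not_mem hj hi)]
      exact hcnt j (List.mem_cons_of_mem i hj)
    rw [totalCost, totalCost_eq_sum_of_nodup (List.nodup_cons.1 hl).2 hcnt',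
      hcnt i List.mem_cons_self]
    simp

variable (hY : ∀ i, 0 ≤ Y i) (hA : ∀ i, 1 ≤ A i)
include hY hA

theorem sum_le_totalCost : ∀ (l : List (Fin k)) (cnt : Fin k → ℕ),
    (l.map Y).sum ≤ totalCost Y A l cnt
  | [], _ => le_rfl
  | i :: l, cnt => by
    rw [totalCost, List.map_cons, List.sum_cons]
    gcongr
    · exact le_mul_of_one_le_right (hY i) (one_le_pow₀ (hA i))
    · exact sum_le_totalCost l _

theorem totalCost_nonneg (l : List (Fin k)) (cnt : Fin k → ℕ) : 0 ≤ totalCost Y A l cnt :=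
  (List.sum_nonneg (by simpa using fun i _ => hY i)).trans (sum_le_totalCost hY hA l cnt)

theorem totalCost_le_totalCost_cons (j : Fin k) (l : List (Fin k)) (cnt : Fin k → ℕ) :
    totalCost Y A l (Function.update cnt j (cnt j + 1)) ≤ totalCost Y A (j :: l) cnt :=
  le_add_of_nonneg_left (mul_nonneg (hY j) (pow_nonneg (zero_le_one.trans (hA j)) _))

theorem mul_le_totalCost_of_mem {i : Fin k} :
    ∀ {l : List (Fin k)} {cnt : Fin k → ℕ}, i ∈ l → 1 ≤ cnt i →
      Y i * A i ≤ totalCost Y A l cnt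
  | j :: l, cnt, hi, hcnt => by
    by_cases hij : i = j
    · subst hij
      have : Y i * A i ≤ Y i * A i ^ cnt i :=
        mul_le_mul_of_nonneg_left (le_self_pow₀ (hA i) (by omega)) (hY i)
      rw [totalCost]
      linarith [totalCost_nonneg hY hA l (Function.update cnt i (cnt i + 1))]
    · have hil : i ∈ l := (List.mem_cons.1 hi).resolve_left hij
      exact (mul_le_totalCost_of_mem hil (by rwa [Function.update_of_ne hij])).trans
        (totalCost_le_totalCost_cons hY hA j l cnt)

theorem exists_mul_le_totalCost_of_not_nodup :
    ∀ {l : List (Fin k)} {cnt : Fin k → ℕ}, ¬ l.Nodup →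
      ∃ i, Y i * A i ≤ totalCost Y A l cnt
  | [], _, hl => absurd List.nodup_nil hl
  | j :: l, cnt, hl => by
    rw [List.nodup_cons, not_and_or, not_not] at hl
    obtain ⟨i, hi⟩ :
        ∃ i, Y i * A i ≤ totalCost Y A l (Function.update cnt j (cnt j + 1)) := by
      rcases hl with hjl | hl
      · exact ⟨j, mul_le_totalCost_of_mem hY hA hjl (by simp)⟩
      · exact exists_mul_le_totalCost_of_not_nodup hl
    exact ⟨i, hi.trans (totalCost_le_totalCost_cons hY hA j l cnt)⟩

end TotalCost

section Reduction

variable {k : ℕ} (a : Fin k → ℕ) {B : ℕ} {W L : ℝ}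

theorem cast_sum_map (l : List (Fin k)) :
    ((l.map a).sum : ℝ) = (l.map fun i => (a i : ℝ)).sum := by
  rw [Nat.cast_list_sum, List.map_map]
  rfl

theorem sum_map_div_eq (l : List (Fin k)) :
    (l.map fun i => (a i : ℝ) / W).sum = ((l.map a).sum : ℝ) / W := by
  simp only [div_eq_mul_inv, List.sum_map_mul_right, cast_sum_map]

theorem reachesRate_of_sum_eq (hW : 0 < W) (hL : 0 ≤ L) {S : Finset (Fin k)}
    (hS : ∑ i ∈ S, a i = B) :
    ReachesRate (fun i => (a i : ℝ) / W) (fun i => (a i : ℝ)) (fun _ => L)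
      (1 + (B : ℝ) / W) (B : ℝ) := by
  have hsum : ((S.toList.map a).sum : ℝ) = B := by rw [Finset.sum_map_toList, hS]
  refine ⟨S.toList, ?_, ?_⟩
  · rw [run_rate, sum_map_div_eq, hsum]
  · have hcost : totalCost (fun i => (a i : ℝ)) (fun _ => L) S.toList (fun _ => 0) = B := by
      rw [totalCost_eq_sum_of_nodup S.nodup_toList (fun _ _ => rfl), ← hsum, cast_sum_map]
    have := run_time_le _ _ _ (fun i => div_nonneg (a i).cast_nonneg hW.le)
      (fun i => (a i).cast_nonneg) (fun _ => hL) S.toList 0 0 1 (fun _ => 0) le_rfl le_rfl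
    linarith

theorem exists_sum_eq_of_reachesRate (ha : ∀ i, 0 < a i) (hW : (B : ℝ) ^ 2 + B < W)
    (hL : (B : ℝ) + 1 ≤ L)
    (h : ReachesRate (fun i => (a i : ℝ) / W) (fun i => (a i : ℝ)) (fun _ => L)
      (1 + (B : ℝ) / W) (B : ℝ)) :
    ∃ S : Finset (Fin k), ∑ i ∈ S, a i = B := by
  obtain ⟨l, hR, hT⟩ := h
  have hW0 : 0 < W := lt_of_le_of_lt (by positivity) hW
  set n := (l.map a).sum
  set cost := totalCost (fun i => (a i : ℝ)) (fun _ => L) l (fun _ => 0)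
  have hY : ∀ i, 0 ≤ (a i : ℝ) := fun i => (a i).cast_nonneg
  have hA : ∀ _ : Fin k, (1 : ℝ) ≤ L := fun _ => by linarith [B.cast_nonneg (α := ℝ)]
  have hrate : (run (fun i => (a i : ℝ) / W) (fun i => (a i : ℝ)) (fun _ => L) l
      (0, 0, 1, fun _ => 0)).2.2.1 = 1 + n / W := by
    rw [run_rate, sum_map_div_eq]
  have hBn : (B : ℝ) ≤ n := by
    rw [hrate, ge_iff_le, add_le_add_iff_left] at hR
    exact (div_le_div_iff_of_pos_right hW0).1 hR
  have hcost : cost ≤ (1 + n / W) * B := by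
    have := totalCost_le_run _ (fun i => (a i : ℝ)) (fun _ => L)
      (fun i => div_nonneg (hY i) hW0.le) l 0 0 1 (fun _ => 0) le_rfl one_pos
    rw [hrate] at this
    nlinarith [div_nonneg n.cast_nonneg hW0.le]
  have hncost : (n : ℝ) ≤ cost := by
    rw [cast_sum_map]
    exact sum_le_totalCost hY hA l (fun _ => 0)
  have hnB : n = B := by
    suffices (n : ℝ) < B + 1 by
      have h₁ : B ≤ n := by exact_mod_cast hBn
      have h₂ : n < B + 1 := by exact_mod_cast this
      omega
    have : (n : ℝ) * W ≤ (W + n) * B := by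
      have := (hncost.trans hcost)
      rw [add_div' _ _ _ hW0.ne', div_mul_eq_mul_div, le_div_iff₀ hW0] at this
      linarith
    nlinarith
  have hcostB : cost < B + 1 := by
    rw [hnB] at hcost
    have : (B : ℝ) / W * B < 1 := by
      rw [div_mul_eq_mul_div, div_lt_one hW0]
      nlinarith
    nlinarith
  have hl : l.Nodup := by
    by_contra hl
    obtain ⟨i, hi⟩ := exists_mul_le_totalCost_of_not_nodup hY hA (cnt := fun _ => 0) hl
    have : L ≤ a i * L := le_mul_of_one_le_left (by linarith) (by exact_mod_cast ha i)
    linarith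
  exact ⟨l.toFinset, (List.sum_toFinset _ hl).trans hnB⟩

end Reduction

theorem stmt_13_general (k B : ℕ)
    (a : Fin k → ℕ) (ha : ∀ i, 0 < a i) :
    ∃ L₀ : ℝ, ∀ L : ℝ, L ≥ L₀ →
      ((∃ S : Finset (Fin k), ∑ i ∈ S, a i = B) ↔
        ReachesRate (fun i => (a i : ℝ) / ((B : ℝ) ^ 2 + B + 1))
          (fun i => (a i : ℝ)) (fun _ => L)
          (1 + (B : ℝ) / ((B : ℝ) ^ 2 + B + 1)) (B : ℝ)) := by
  have hB : (0 : ℝ) ≤ B := B.cast_nonneg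
  refine ⟨B + 1, fun L hL => ⟨fun ⟨S, hS⟩ => ?_, ?_⟩⟩
  · exact reachesRate_of_sum_eq a (by positivity) (by linarith) hS
  · exact exists_sum_eq_of_reachesRate a ha (by linarith) hL

/-- NP-hardness of the rate-goal version of Cookie Clicker, expressed as the
correctness of the many-one reduction from the NP-hard problem PARTITION:
given positive integers `a₁, …, a_k` summing to `2B`, with `W = B² + B + 1`,
items `(a_i / W, a_i, L)` for a sufficiently large cost multiplier `L`,
rate goal `R = 1 + B / W` and time bound `T = B`, a partition exists iff the
constructed Cookie Clicker instance is a yes-instance. -/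
theorem stmt_13 (k B : ℕ) (hk : 0 < k) (hB : 0 < B)
    (a : Fin k → ℕ) (ha : ∀ i, 0 < a i) (hsum : ∑ i, a i = 2 * B) :
    ∃ L₀ : ℝ, ∀ L : ℝ, L ≥ L₀ →
      ((∃ S : Finset (Fin k), ∑ i ∈ S, a i = B) ↔
        ReachesRate (fun i => (a i : ℝ) / ((B : ℝ) ^ 2 + B + 1))
          (fun i => (a i : ℝ)) (fun _ => L)
          (1 + (B : ℝ) / ((B : ℝ) ^ 2 + B + 1)) (B : ℝ)) :=
  stmt_13_general k B a ha
end

section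
/- Fix a rate G > 0, number of cookies goal M > 0, and an item with rate increase x and cost y. Consider strategies that, starting with 0 cookies at rate G, buy the item k times (purchase n costs y at rate G+(n−1)x, taking y/(G+(n−1)x) time) then wait M/(G+kx). If y/G + M/(G+x) > M/G, then for every k ≥ 1 the total time of the k-purchase strategy strictly exceeds M/G. -/
/-! Since costs are fixed, one more purchase at rate `r` is a loss exactly when `M x < y (r + x)`,
a condition that only gets easier as `r` grows. The hypothesis is this condition at `r = G`, so each
of the successive rates `G + n x` satisfies it, and the total time strictly increases with the number
of purchases. -/

open Finset

lemma lt_div_add_div_add_iff {M r x y : ℝ} (hr : 0 < r) (hx : 0 ≤ x) :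
    M / r < y / r + M / (r + x) ↔ M * x < y * (r + x) := by
  have hrx : 0 < r + x := by linarith
  rw [div_add_div _ _ hr.ne' hrx.ne', div_lt_div_iff₀ hr (mul_pos hr hrx)]
  constructor <;> intro h <;> nlinarith [mul_pos hr hrx]

lemma lt_div_add_div_add_of_le {M r r' x y : ℝ} (hr : 0 < r) (hrr' : r ≤ r') (hx : 0 ≤ x)
    (hy : 0 ≤ y) (h : M / r < y / r + M / (r + x)) :
    M / r' < y / r' + M / (r' + x) := by
  rw [lt_div_add_div_add_iff (hr.trans_le hrr') hx]
  rw [lt_div_add_div_add_iff hr hx] at h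
  nlinarith

/-- Time to reach `M` cookies from rate `G` when first buying `k` items, each of cost `y`
adding `x` to the rate. -/
noncomputable def totalTime (G M x y : ℝ) (k : ℕ) : ℝ :=
  (∑ n ∈ range k, y / (G + n * x)) + M / (G + k * x)

lemma totalTime_zero (G M x y : ℝ) : totalTime G M x y 0 = M / G := by
  simp [totalTime]

lemma totalTime_succ (G M x y : ℝ) (k : ℕ) :
    totalTime G M x y (k + 1) - totalTime G M x y k
      = y / (G + k * x) + M / (G + k * x + x) - M / (G + k * x) := by
  simp only [totalTime, sum_range_succ, Nat.cast_succ, add_one_mul, add_assoc]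
  ring

lemma totalTime_strictMono {G M x y : ℝ} (hG : 0 < G) (hx : 0 ≤ x) (hy : 0 ≤ y)
    (h : M / G < y / G + M / (G + x)) : StrictMono (totalTime G M x y) := by
  refine strictMono_nat_of_lt_succ fun k ↦ sub_pos.mp ?_
  have hGk : G ≤ G + k * x := le_add_of_nonneg_right (by positivity)
  rw [totalTime_succ, sub_pos]
  exact lt_div_add_div_add_of_le hG hGk hx hy h

theorem stmt_16_general (G M x y : ℝ)
    (hG : 0 < G) (hx : 0 < x) (hy : 0 < y)
    (h : y / G + M / (G + x) > M / G) :
    ∀ k : ℕ, 1 ≤ k →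
      (∑ n ∈ Finset.range k, y / (G + n * x)) + M / (G + k * x) > M / G := by
  intro k hk
  have hmono := totalTime_strictMono hG hx.le hy.le h (Nat.lt_of_succ_le hk)
  rwa [totalTime_zero] at hmono

theorem stmt_16 (G M x y : ℝ)
    (hG : 0 < G) (hM : 0 < M) (hx : 0 < x) (hy : 0 < y)
    (h : y / G + M / (G + x) > M / G) :
    ∀ k : ℕ, 1 ≤ k →
      (∑ n ∈ Finset.range k, y / (G + n * x)) + M / (G + k * x) > M / G :=
  stmt_16_general G M x y hG hx hy h
end
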